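/- Let 1<p<∞ and α≥0, and set p̂ = max{p,p'}. Every multiplier μ ∈ M[H^α_p → H^{-α}_p] belongs to H^{-α}_{p̂,unif}(ℝⁿ), with ‖μ‖_{-α,p̂,unif} ≤ C‖μ‖_{M^α_p}. -/

import Mathlib

open MeasureTheory FourierTransform Real Metric Complex
open scoped ENNReal Topology

noncomputable section

/-- Euclidean space ℝⁿ. -/
abbrev Euc (n : ℕ) := EuclideanSpace ℝ (Fin n)

/-- A test function: infinitely differentiable with compact support (`φ ∈ C_c^∞(ℝⁿ)`). -/
def IsTest {n : ℕ} (φ : Euc n → ℂ) : Prop :=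
  ContDiff ℝ (⊤ : ℕ∞) φ ∧ HasCompactSupport φ

/-- The Bessel potential `(1-Δ)^{α/2} f`, realized via the Fourier transform:
`𝓕⁻¹ ((1+|ξ|²)^{α/2} 𝓕 f)`. -/
def besselPotential (n : ℕ) (α : ℝ) (f : Euc n → ℂ) : Euc n → ℂ :=
  𝓕⁻ (fun ξ : Euc n => (((1 + ‖ξ‖ ^ 2) ^ (α / 2) : ℝ) : ℂ) * 𝓕 f ξ)

/-- The Bessel-potential Sobolev norm `‖f‖_{H^α_p} = ‖(1-Δ)^{α/2} f‖_{L_p}`,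
with `p ∈ [1,∞]` an extended real exponent. -/
def HNormE (n : ℕ) (α : ℝ) (p : ℝ≥0∞) (f : Euc n → ℂ) : ℝ :=
  (eLpNorm (besselPotential n α f) p volume).toReal

/-- The Bessel-potential Sobolev norm, for a real exponent `p`. -/
def HNorm (n : ℕ) (α p : ℝ) (f : Euc n → ℂ) : ℝ :=
  HNormE n α (ENNReal.ofReal p) f

/-- Membership of a function in `H^α_p`. -/
def MemH (n : ℕ) (α p : ℝ) (f : Euc n → ℂ) : Prop :=
  eLpNorm (besselPotential n α f) (ENNReal.ofReal p) volume < ⊤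

/-- The Hölder conjugate exponent `p' = p/(p-1)` (as a real number, for `1 < p < ∞`). -/
def conjExp (p : ℝ) : ℝ := p / (p - 1)

/-- The Hölder conjugate exponent as an extended real exponent (`1' = ∞`). -/
def conjExpE (p : ℝ) : ℝ≥0∞ := if p ≤ 1 then ∞ else ENNReal.ofReal (p / (p - 1))

/-- Distributions, modelled as functionals on functions on ℝⁿ;
they are only ever applied to (products of) test functions. -/
def Distr (n : ℕ) := (Euc n → ℂ) → ℂ

/-- The product of a function and a distribution: `(φμ)(ψ) = μ(φψ)`. -/
def distMul {n : ℕ} (φ : Euc n → ℂ) (μ : Distr n) : Distr n :=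
  fun ψ => μ (fun x => φ x * ψ x)

/-- `μ` lies in `H^{-γ}_r` with constant `C`: `|⟨μ, ψ⟩| ≤ C‖ψ‖_{H^γ_{r'}}` for all test
functions `ψ` (`C_c^∞` being dense in `H^γ_{r'}`, this realizes the dual norm). -/
def NegBound (n : ℕ) (γ r : ℝ) (μ : Distr n) (C : ℝ) : Prop :=
  0 ≤ C ∧ ∀ ψ : Euc n → ℂ, IsTest ψ → ‖μ ψ‖ ≤ C * HNormE n γ (conjExpE r) ψ

/-- Membership `μ ∈ H^{-γ}_r` for a distribution `μ`. -/
def MemNeg (n : ℕ) (γ r : ℝ) (μ : Distr n) : Prop := ∃ C, NegBound n γ r μ C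

/-- The norm `‖μ‖_{H^{-γ}_r}`, as the best constant. -/
def negNorm (n : ℕ) (γ r : ℝ) (μ : Distr n) : ℝ := sInf {C | NegBound n γ r μ C}

/-- `μ ∈ H^{-γ}_{r,loc}`: every localization `φμ` by a test function lies in `H^{-γ}_r`. -/
def MemNegLoc (n : ℕ) (γ r : ℝ) (μ : Distr n) : Prop :=
  ∀ φ : Euc n → ℂ, IsTest φ → MemNeg n γ r (distMul φ μ)

/-- `μ` is a multiplier from `H^α_p` to `H^{-α}_p` with constant `C`:
`‖μφ‖_{H^{-α}_p} ≤ C ‖φ‖_{H^α_p}` for all test functions `φ`. -/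
def MulBound (n : ℕ) (α p : ℝ) (μ : Distr n) (C : ℝ) : Prop :=
  0 ≤ C ∧ ∀ φ : Euc n → ℂ, IsTest φ → negNorm n α p (distMul φ μ) ≤ C * HNorm n α p φ

/-- `μ ∈ M[H^α_p → H^{-α}_p]`. -/
def IsMultiplier (n : ℕ) (α p : ℝ) (μ : Distr n) : Prop :=
  MemNegLoc n α p μ ∧ ∃ C, MulBound n α p μ C

/-- The multiplier norm `‖μ‖_{M^α_p}`. -/
def mulNorm (n : ℕ) (α p : ℝ) (μ : Distr n) : ℝ := sInf {C | MulBound n α p μ C}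

/-- A fixed admissible cutoff: smooth, compactly supported, nonnegative, `≡ 1` on the
unit ball. -/
def IsCutoff {n : ℕ} (η : Euc n → ℝ) : Prop :=
  ContDiff ℝ (⊤ : ℕ∞) η ∧ HasCompactSupport η ∧ (∀ x, 0 ≤ η x) ∧
    ∀ x ∈ closedBall (0 : Euc n) 1, η x = 1

/-- The translated cutoff `η(· − z)`, as a complex-valued function. -/
def shiftCutoff {n : ℕ} (η : Euc n → ℝ) (z : Euc n) : Euc n → ℂ :=
  fun x => ((η (x - z) : ℝ) : ℂ)

/-- `u ∈ H^α_{p,unif}` (with respect to the cutoff `η`). -/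
def MemHUnif (n : ℕ) (η : Euc n → ℝ) (α p : ℝ) (u : Euc n → ℂ) : Prop :=
  BddAbove (Set.range fun z : Euc n => HNorm n α p (fun x => shiftCutoff η z x * u x))

/-- The norm `‖u‖_{α,p,unif} = sup_z ‖η(·-z)u‖_{H^α_p}`. -/
def unifNorm (n : ℕ) (η : Euc n → ℝ) (α p : ℝ) (u : Euc n → ℂ) : ℝ :=
  ⨆ z : Euc n, HNorm n α p (fun x => shiftCutoff η z x * u x)

/-- `μ ∈ H^{-γ}_{r,unif}` (for a distribution `μ`). -/
def MemNegUnif (n : ℕ) (η : Euc n → ℝ) (γ r : ℝ) (μ : Distr n) : Prop :=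
  (∀ z : Euc n, MemNeg n γ r (distMul (shiftCutoff η z) μ)) ∧
    BddAbove (Set.range fun z : Euc n => negNorm n γ r (distMul (shiftCutoff η z) μ))

/-- The norm `‖μ‖_{-γ,r,unif} = sup_z ‖η(·-z)μ‖_{H^{-γ}_r}`. -/
def negUnifNorm (n : ℕ) (η : Euc n → ℝ) (γ r : ℝ) (μ : Distr n) : ℝ :=
  ⨆ z : Euc n, negNorm n γ r (distMul (shiftCutoff η z) μ)

/-- Polking's nonlinear operator
`D^η_{ρ,q} u(x) = [∫_0^∞ (∫_{B₁} |u(x+ξy)-u(x)|^ρ dy)^{q/ρ} ξ^{-1-ηq} dξ]^{1/q}`. -/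
def Dop (n : ℕ) (η ρ q : ℝ) (u : Euc n → ℂ) (x : Euc n) : ℝ :=
  (∫ ξ in Set.Ioi (0 : ℝ),
      (∫ y in ball (0 : Euc n) 1, ‖u (x + ξ • y) - u x‖ ^ ρ) ^ (q / ρ) *
        ξ ^ (-1 - η * q)) ^ (1 / q)

/-- The `i`-th standard basis vector of ℝⁿ. -/
def eucBasis (n : ℕ) (i : Fin n) : Euc n := EuclideanSpace.single i 1

/-- The negative Laplacian `-Δ f = -∑ ∂²f/∂x_i²`. -/
def negLap {n : ℕ} (f : Euc n → ℂ) : Euc n → ℂ := fun x =>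
  -∑ i : Fin n, fderiv ℝ (fun y => fderiv ℝ f y (eucBasis n i)) x (eucBasis n i)

/-- The polyharmonic operator `(-Δ)^m`. -/
def polyharmonic (n m : ℕ) (f : Euc n → ℂ) : Euc n → ℂ := negLap^[m] f

/-- The Schrödinger-type operator `L u = (-Δ)^m u + q·u`, viewed as a distribution when
applied to a (test) function `u`. -/
def schrodingerOp (n m : ℕ) (q : Distr n) (u : Euc n → ℂ) : Distr n :=
  fun ψ => (∫ x : Euc n, polyharmonic n m u x * ψ x) + q (fun x => u x * ψ x)

/-- Boundedness of `L = (-Δ)^m + q` from `H^m_p` to `H^{-m}_p`: defined first on test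
functions (and then extended by density). -/
def LBounded (n m : ℕ) (p : ℝ) (q : Distr n) : Prop :=
  ∃ C, 0 ≤ C ∧ ∀ u : Euc n → ℂ, IsTest u →
    MemNeg n m p (schrodingerOp n m q u) ∧
      negNorm n m p (schrodingerOp n m q u) ≤ C * HNorm n m p u

end


open scoped RealInnerProductSpace

noncomputable section AuxShift

private lemma fourier_shift {n : ℕ} (f : Euc n → ℂ) (z ξ : Euc n) :
    𝓕 (fun x => f (x - z)) ξ
      = Complex.exp ((((-2) * π * ⟪z, ξ⟫ : ℝ) : ℂ) * Complex.I) * 𝓕 f ξ := by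
  rw [Real.fourier_eq', Real.fourier_eq']
  have h := MeasureTheory.integral_add_right_eq_self
      (μ := (volume : Measure (Euc n)))
      (fun x => Complex.exp ((((-2) * π * ⟪x, ξ⟫ : ℝ) : ℂ) * Complex.I) • f (x - z)) z
  rw [← h]
  simp_rw [smul_eq_mul, add_sub_cancel_right]
  rw [← MeasureTheory.integral_const_mul]
  congr 1; ext x
  rw [← mul_assoc, ← Complex.exp_add]
  congr 2
  rw [inner_add_left]
  push_cast; ring

private lemma fourierInv_mod {n : ℕ} (g : Euc n → ℂ) (z x : Euc n) :
    𝓕⁻ (fun ξ => Complex.exp ((((-2) * π * ⟪z, ξ⟫ : ℝ) : ℂ) * Complex.I) * g ξ) x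
      = 𝓕⁻ g (x - z) := by
  rw [Real.fourierInv_eq', Real.fourierInv_eq']
  congr 1; ext ξ
  rw [smul_eq_mul, smul_eq_mul, ← mul_assoc, ← Complex.exp_add]
  congr 2
  rw [inner_sub_right, real_inner_comm z ξ]
  push_cast; ring

private lemma besselPotential_shift {n : ℕ} (α : ℝ) (f : Euc n → ℂ) (z : Euc n) :
    besselPotential n α (fun x => f (x - z)) = fun x => besselPotential n α f (x - z) := by
  unfold besselPotential
  funext x
  have h : (fun ξ : Euc n => (((1 + ‖ξ‖ ^ 2) ^ (α / 2) : ℝ) : ℂ) * 𝓕 (fun x => f (x - z)) ξ)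
      = fun ξ => Complex.exp ((((-2) * π * ⟪z, ξ⟫ : ℝ) : ℂ) * Complex.I) *
          ((((1 + ‖ξ‖ ^ 2) ^ (α / 2) : ℝ) : ℂ) * 𝓕 f ξ) := by
    funext ξ; rw [fourier_shift]; ring
  rw [h, fourierInv_mod]

private lemma eLpNorm_shift {n : ℕ} (F : Euc n → ℂ) (q : ℝ≥0∞) (z : Euc n) :
    eLpNorm (fun x => F (x - z)) q volume = eLpNorm F q volume := by
  have h : MeasurePreserving (fun x : Euc n => x - z) volume volume :=
    measurePreserving_sub_right volume z
  calc eLpNorm (fun x => F (x - z)) q volume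
      = eLpNorm (F ∘ fun x : Euc n => x - z) q volume := rfl
    _ = eLpNorm F q (Measure.map (fun x : Euc n => x - z) volume) :=
        ((MeasurableEquiv.subRight z).measurableEmbedding.eLpNorm_map_measure).symm
    _ = eLpNorm F q volume := by rw [h.map_eq]

private lemma HNormE_shift {n : ℕ} (α : ℝ) (q : ℝ≥0∞) (f : Euc n → ℂ) (z : Euc n) :
    HNormE n α q (fun x => f (x - z)) = HNormE n α q f := by
  unfold HNormE
  rw [besselPotential_shift, eLpNorm_shift]

private lemma HNormE_shiftCutoff {n : ℕ} (α : ℝ) (q : ℝ≥0∞) (η : Euc n → ℝ) (z : Euc n) :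
    HNormE n α q (shiftCutoff η z) = HNormE n α q (fun x => ((η x : ℝ) : ℂ)) :=
  HNormE_shift α q (fun y : Euc n => ((η y : ℝ) : ℂ)) z

private lemma isTest_shiftCutoff {n : ℕ} {η : Euc n → ℝ} (hη : IsCutoff η) (z : Euc n) :
    IsTest (shiftCutoff η z) := by
  constructor
  · exact Complex.ofRealCLM.contDiff.comp (hη.1.comp (contDiff_id.sub contDiff_const))
  · have h1 : HasCompactSupport (fun x : Euc n => η (x - z)) :=
      hη.2.1.comp_homeomorph (Homeomorph.subRight z)
    exact h1.comp_left (g := Complex.ofReal) Complex.ofReal_zero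

private lemma le_csInf_mul {S : Set ℝ} (hne : S.Nonempty) {a H : ℝ} (hH : 0 ≤ H)
    (hb : ∀ C ∈ S, a ≤ C * H) : a ≤ sInf S * H := by
  rcases hH.lt_or_eq with hpos | h0
  · have hlb : a / H ≤ sInf S :=
      le_csInf hne fun C hC => (div_le_iff₀ hpos).mpr (hb C hC)
    have hm := mul_le_mul_of_nonneg_right hlb hH
    rwa [div_mul_cancel₀ _ (ne_of_gt hpos)] at hm
  · obtain ⟨C, hC⟩ := hne
    have hx := hb C hC
    rw [← h0, mul_zero] at hx ⊢
    exact hx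

private lemma negNorm_spec {n : ℕ} {γ r : ℝ} {μ : Distr n} (h : MemNeg n γ r μ)
    {ψ : Euc n → ℂ} (hψ : IsTest ψ) :
    ‖μ ψ‖ ≤ negNorm n γ r μ * HNormE n γ (conjExpE r) ψ :=
  le_csInf_mul h ENNReal.toReal_nonneg fun C hC => hC.2 ψ hψ

private lemma mulNorm_nonneg {n : ℕ} {α p : ℝ} {μ : Distr n}
    (h : ∃ C, MulBound n α p μ C) : 0 ≤ mulNorm n α p μ :=
  le_csInf h fun _ hC => hC.1

private lemma mulNorm_spec {n : ℕ} {α p : ℝ} {μ : Distr n}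
    (h : ∃ C, MulBound n α p μ C)
    {φ : Euc n → ℂ} (hφ : IsTest φ) :
    negNorm n α p (distMul φ μ) ≤ mulNorm n α p μ * HNorm n α p φ :=
  le_csInf_mul h ENNReal.toReal_nonneg fun C hC => hC.2 φ hφ

end AuxShift

/-- For `1<p<∞`, `α ≥ 0` and `p̂ = max(p,p')`, every multiplier
`μ ∈ M[H^α_p → H^{-α}_p]` lies in `H^{-α}_{p̂,unif}` with
`‖μ‖_{-α,p̂,unif} ≤ C‖μ‖_{M^α_p}`. -/
theorem multiplier_mem_uniform_negative {n : ℕ} (p α : ℝ) (hp1 : 1 < p) (hα : 0 ≤ α)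
    (η : Euc n → ℝ) (hη : IsCutoff η) :
    ∃ C : ℝ, 0 ≤ C ∧ ∀ μ : Distr n, IsMultiplier n α p μ →
      MemNegUnif n η α (max p (conjExp p)) μ ∧
        negUnifNorm n η α (max p (conjExp p)) μ ≤ C * mulNorm n α p μ := by
  have hps : (0:ℝ) < p - 1 := by linarith
  set ηC : Euc n → ℂ := fun x => ((η x : ℝ) : ℂ) with hηC
  set K1 : ℝ := HNorm n α p ηC with hK1
  set K2 : ℝ := HNormE n α (conjExpE p) ηC with hK2
  have hK1n : 0 ≤ K1 := ENNReal.toReal_nonneg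
  have hK2n : 0 ≤ K2 := ENNReal.toReal_nonneg
  refine ⟨max K1 K2, le_trans hK1n (le_max_left _ _), fun μ hμ => ?_⟩
  obtain ⟨hloc, hC⟩ := hμ
  have hmul0 : 0 ≤ mulNorm n α p μ := mulNorm_nonneg hC
  have key : ∀ z : Euc n, NegBound n α (max p (conjExp p))
      (distMul (shiftCutoff η z) μ) (max K1 K2 * mulNorm n α p μ) := by
    intro z
    refine ⟨mul_nonneg (le_trans hK1n (le_max_left _ _)) hmul0, fun ψ hψ => ?_⟩
    rcases le_total 2 p with hp2 | hp2
    · -- p ≥ 2, so max p (conjExp p) = p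
      have hle : conjExp p ≤ p := by
        rw [conjExp, div_le_iff₀ hps]; nlinarith
      have hmax : max p (conjExp p) = p := max_eq_left hle
      rw [hmax]
      have h1 := negNorm_spec (hloc _ (isTest_shiftCutoff hη z)) hψ
      have h2 := mulNorm_spec hC (isTest_shiftCutoff hη z)
      have h3 : HNorm n α p (shiftCutoff η z) = K1 :=
        HNormE_shiftCutoff α (ENNReal.ofReal p) η z
      rw [h3] at h2
      have hH : 0 ≤ HNormE n α (conjExpE p) ψ := ENNReal.toReal_nonneg
      calc ‖distMul (shiftCutoff η z) μ ψ‖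
          ≤ negNorm n α p (distMul (shiftCutoff η z) μ) * HNormE n α (conjExpE p) ψ := h1
        _ ≤ mulNorm n α p μ * K1 * HNormE n α (conjExpE p) ψ :=
            mul_le_mul_of_nonneg_right h2 hH
        _ ≤ max K1 K2 * mulNorm n α p μ * HNormE n α (conjExpE p) ψ := by
            refine mul_le_mul_of_nonneg_right ?_ hH
            rw [mul_comm]
            exact mul_le_mul_of_nonneg_right (le_max_left _ _) hmul0
    · -- p ≤ 2, so max p (conjExp p) = conjExp p and (conjExp p)' = p
      have hge : p ≤ conjExp p := by
        rw [conjExp, le_div_iff₀ hps]; nlinarith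
      have hmax : max p (conjExp p) = conjExp p := max_eq_right hge
      have hconjgt : 1 < conjExp p := by
        rw [conjExp, lt_div_iff₀ hps]; linarith
      have hconjE : conjExpE (conjExp p) = ENNReal.ofReal p := by
        rw [conjExpE, if_neg (not_le.mpr hconjgt)]
        congr 1
        rw [conjExp]
        field_simp
        ring
      have hswap : distMul (shiftCutoff η z) μ ψ = distMul ψ μ (shiftCutoff η z) := by
        show μ (fun x => shiftCutoff η z x * ψ x) = μ (fun x => ψ x * shiftCutoff η z x)
        congr 1; funext x; ring
      rw [hmax, hconjE, hswap]
      have h1 := negNorm_spec (hloc ψ hψ) (isTest_shiftCutoff hη z)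
      have h2 := mulNorm_spec hC hψ
      have h3 : HNormE n α (conjExpE p) (shiftCutoff η z) = K2 :=
        HNormE_shiftCutoff α (conjExpE p) η z
      rw [h3] at h1
      have hHp : HNormE n α (ENNReal.ofReal p) ψ = HNorm n α p ψ := rfl
      have hH : 0 ≤ HNorm n α p ψ := ENNReal.toReal_nonneg
      rw [hHp]
      calc ‖distMul ψ μ (shiftCutoff η z)‖
          ≤ negNorm n α p (distMul ψ μ) * K2 := h1
        _ ≤ mulNorm n α p μ * HNorm n α p ψ * K2 :=
            mul_le_mul_of_nonneg_right h2 hK2n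
        _ = K2 * mulNorm n α p μ * HNorm n α p ψ := by ring
        _ ≤ max K1 K2 * mulNorm n α p μ * HNorm n α p ψ := by
            refine mul_le_mul_of_nonneg_right ?_ hH
            exact mul_le_mul_of_nonneg_right (le_max_right _ _) hmul0
  have hnorm_le : ∀ z : Euc n,
      negNorm n α (max p (conjExp p)) (distMul (shiftCutoff η z) μ)
        ≤ max K1 K2 * mulNorm n α p μ := fun z =>
    csInf_le ⟨0, fun _ hD => hD.1⟩ (key z)
  refine ⟨⟨fun z => ⟨_, key z⟩, ⟨max K1 K2 * mulNorm n α p μ, ?_⟩⟩, ?_⟩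
  · rintro x ⟨z, rfl⟩
    exact hnorm_le z
  · exact ciSup_le hnorm_le
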